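/- Let (M,g,φ) be a Riemannian manifold with density and let ν be a distribution on M that is parallel with respect to the weighted connection ∇^φ (i.e. ∇^φ_X Y is a section of ν whenever Y is a section of ν). Then both ν and its g-orthogonal complement ν^⊥ are integrable distributions. -/

import Mathlib

/-!
An algebraic (Koszul-style) model of the calculus of smooth functions and smooth vector
fields on a smooth manifold `M`:  `V` plays the role of the space of smooth vector fields
on `M`, a module over the ring `M → ℝ` of (smooth) real-valued functions; `dir X f` is the
directional derivative `D_X f` of the function `f` along the vector field `X`, and
`bracket` is the Lie bracket of vector fields.
-/
structure VectorFieldCalculus (M V : Type*) [AddCommGroup V] [Module (M → ℝ) V] where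
  /-- the directional derivative `D_X f` of a function along a vector field -/
  dir : V → (M → ℝ) → (M → ℝ)
  /-- the Lie bracket of vector fields -/
  bracket : V → V → V
  dir_add : ∀ X f g, dir X (f + g) = dir X f + dir X g
  dir_mul : ∀ X f g, dir X (f * g) = f * dir X g + g * dir X f
  dir_const : ∀ X (c : ℝ), dir X (fun _ => c) = 0
  dir_add_left : ∀ X Y f, dir (X + Y) f = dir X f + dir Y f
  dir_smul_left : ∀ (h : M → ℝ) X f, dir (h • X) f = h * dir X f

/-- A Riemannian metric in the algebraic model:  a symmetric, function-bilinear,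
positive-definite pairing of vector fields with values in functions. -/
structure RiemannMetric (M V : Type*) [AddCommGroup V] [Module (M → ℝ) V] where
  /-- the metric pairing `g(X,Y)`, a function on `M` -/
  g : V → V → M → ℝ
  symm : ∀ X Y, g X Y = g Y X
  add_left : ∀ X Y Z, g (X + Y) Z = g X Z + g Y Z
  smul_left : ∀ (f : M → ℝ) X Y, g (f • X) Y = f * g X Y
  nonneg : ∀ X x, 0 ≤ g X X x
  definite : ∀ X, g X X = 0 → X = 0

variable {M V : Type*} [AddCommGroup V] [Module (M → ℝ) V]

/-- `D` is an affine connection on the vector fields of `M`. -/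
structure IsAffineConnection (C : VectorFieldCalculus M V) (D : V → V → V) : Prop where
  add_left : ∀ X Y Z, D (X + Y) Z = D X Z + D Y Z
  smul_left : ∀ (f : M → ℝ) X Y, D (f • X) Y = f • D X Y
  add_right : ∀ X Y Z, D X (Y + Z) = D X Y + D X Z
  leibniz : ∀ X (f : M → ℝ) Y, D X (f • Y) = C.dir X f • Y + f • D X Y

/-- `D` is torsion-free:  `∇_X Y − ∇_Y X = [X,Y]`. -/
def IsTorsionFree (C : VectorFieldCalculus M V) (D : V → V → V) : Prop :=
  ∀ X Y, D X Y - D Y X = C.bracket X Y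

/-- The connections `D`, `D'` are dual with respect to the metric `gm`:
`D_X g(Y,Z) = g(∇_X Y, Z) + g(Y, ∇*_X Z)`. -/
def AreDual (C : VectorFieldCalculus M V) (gm : RiemannMetric M V)
    (D D' : V → V → V) : Prop :=
  ∀ X Y Z, C.dir X (gm.g Y Z) = gm.g (D X Y) Z + gm.g Y (D' X Z)

/-- The covariant derivative `(∇_X g)(Y,Z)` of the metric with respect to the
connection `D`. -/
def covMetric (C : VectorFieldCalculus M V) (gm : RiemannMetric M V)
    (D : V → V → V) (X Y Z : V) : M → ℝ :=
  C.dir X (gm.g Y Z) - gm.g (D X Y) Z - gm.g Y (D X Z)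

/-- The metric `gm` is Codazzi with respect to `D`:  the `3`-tensor
`D(X,Y,Z) = (∇_X g)(Y,Z)` is totally symmetric. -/
def IsCodazzi (C : VectorFieldCalculus M V) (gm : RiemannMetric M V)
    (D : V → V → V) : Prop :=
  (∀ X Y Z, covMetric C gm D X Y Z = covMetric C gm D Y X Z) ∧
  (∀ X Y Z, covMetric C gm D X Y Z = covMetric C gm D X Z Y)

/-!
The weighted connection `∇^φ` is torsion-free, so a `∇^φ`-parallel distribution `ν` is
involutive: `[X,Y] = ∇^φ_X Y − ∇^φ_Y X`. For the complement, take `A, B ⊥ ν` and `Z ∈ ν`.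
Metric compatibility of `∇` gives `g(∇_A B, Z) = −g(B, ∇_A Z)`, and writing
`∇_A Z = ∇^φ_A Z + dφ(A) Z + dφ(Z) A` with `∇^φ_A Z, Z ∈ ν` leaves
`g(∇_A B, Z) = −dφ(Z) g(A,B)`. This is symmetric in `A, B`, so `g([A,B], Z) = 0`.
-/

namespace RiemannMetric

variable (gm : RiemannMetric M V)

theorem add_right (X Y Z : V) : gm.g X (Y + Z) = gm.g X Y + gm.g X Z := by
  rw [gm.symm, gm.add_left, gm.symm Y, gm.symm Z]

theorem smul_right (f : M → ℝ) (X Y : V) : gm.g X (f • Y) = f * gm.g X Y := by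
  rw [gm.symm, gm.smul_left, gm.symm]

theorem sub_left (X Y Z : V) : gm.g (X - Y) Z = gm.g X Z - gm.g Y Z := by
  rw [sub_eq_add_neg, ← neg_one_smul (M → ℝ) Y, gm.add_left, gm.smul_left]
  ring

def orthogonal (ν : Submodule (M → ℝ) V) : Submodule (M → ℝ) V where
  carrier := {X | ∀ Z ∈ ν, gm.g X Z = 0}
  add_mem' {X Y} hX hY Z hZ := by rw [gm.add_left, hX Z hZ, hY Z hZ, add_zero]
  zero_mem' Z _ := by simpa using gm.smul_left 0 0 Z
  smul_mem' f X hX Z hZ := by rw [gm.smul_left, hX Z hZ, mul_zero]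

end RiemannMetric

def weightedConnection (C : VectorFieldCalculus M V) (D : V → V → V) (φ : M → ℝ) :
    V → V → V :=
  fun X Y => D X Y - C.dir X φ • Y - C.dir Y φ • X

def IsParallel (D : V → V → V) (ν : Submodule (M → ℝ) V) : Prop :=
  ∀ X, ∀ Y ∈ ν, D X Y ∈ ν

section

variable {C : VectorFieldCalculus M V} {D : V → V → V} {ν : Submodule (M → ℝ) V}

theorem IsTorsionFree.weighted (hD : IsTorsionFree C D) (φ : M → ℝ) :
    IsTorsionFree C (weightedConnection C D φ) := by
  intro X Y
  simp only [weightedConnection, ← hD X Y]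
  abel

theorem IsTorsionFree.bracket_mem_of_isParallel (hD : IsTorsionFree C D)
    (hpar : IsParallel D ν) {X Y : V} (hX : X ∈ ν) (hY : Y ∈ ν) : C.bracket X Y ∈ ν := by
  rw [← hD X Y]
  exact ν.sub_mem (hpar X Y hY) (hpar Y X hX)

variable {gm : RiemannMetric M V} {φ : M → ℝ}

theorem AreDual.g_eq_neg_dir_mul_of_mem_orthogonal (hD : AreDual C gm D D)
    (hpar : IsParallel (weightedConnection C D φ) ν) {A B Z : V}
    (hB : B ∈ gm.orthogonal ν) (hZ : Z ∈ ν) :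
    gm.g (D A B) Z = -(C.dir Z φ * gm.g A B) := by
  have hBZ : gm.g B Z = 0 := hB Z hZ
  have hdecomp : D A Z = weightedConnection C D φ A Z + C.dir A φ • Z + C.dir Z φ • A := by
    rw [weightedConnection]
    abel
  have hBDAZ : gm.g B (D A Z) = C.dir Z φ * gm.g A B := by
    rw [hdecomp, gm.add_right, gm.add_right, gm.smul_right, gm.smul_right,
      hB _ (hpar A Z hZ), hBZ, gm.symm B A]
    ring
  have hcompat := hD A B Z
  rw [hBZ, hBDAZ] at hcompat
  rw [eq_neg_iff_add_eq_zero, ← hcompat]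
  exact C.dir_const A 0

theorem IsTorsionFree.bracket_mem_orthogonal_of_isParallel_weightedConnection
    (hTF : IsTorsionFree C D) (hD : AreDual C gm D D)
    (hpar : IsParallel (weightedConnection C D φ) ν) {X Y : V}
    (hX : X ∈ gm.orthogonal ν) (hY : Y ∈ gm.orthogonal ν) :
    C.bracket X Y ∈ gm.orthogonal ν := by
  intro Z hZ
  rw [← hTF X Y, gm.sub_left, hD.g_eq_neg_dir_mul_of_mem_orthogonal hpar hY hZ,
    hD.g_eq_neg_dir_mul_of_mem_orthogonal hpar hX hZ, gm.symm Y X, sub_self]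

end

theorem weighted_parallel_distribution_integrable_general
    {M V : Type*} [AddCommGroup V] [Module (M → ℝ) V]
    (C : VectorFieldCalculus M V) (gm : RiemannMetric M V)
    (lc : V → V → V) (hlcTF : IsTorsionFree C lc)
    (hlcMetric : AreDual C gm lc lc)
    (φ : M → ℝ)
    (ν : Submodule (M → ℝ) V)
    (hpar : ∀ X : V, ∀ Y ∈ ν, (lc X Y - C.dir X φ • Y - C.dir Y φ • X) ∈ ν) :
    (∀ X ∈ ν, ∀ Y ∈ ν, C.bracket X Y ∈ ν) ∧
    (∀ X Y : V, (∀ Z ∈ ν, gm.g X Z = 0) → (∀ Z ∈ ν, gm.g Y Z = 0) →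
      ∀ Z ∈ ν, gm.g (C.bracket X Y) Z = 0) := by
  have hparallel : IsParallel (weightedConnection C lc φ) ν := hpar
  exact ⟨fun X hX Y hY => (hlcTF.weighted φ).bracket_mem_of_isParallel hparallel hX hY,
    fun X Y hX hY => hlcTF.bracket_mem_orthogonal_of_isParallel_weightedConnection
      hlcMetric hparallel hX hY⟩

theorem weighted_parallel_distribution_integrable
    {M V : Type*} [AddCommGroup V] [Module (M → ℝ) V]
    (C : VectorFieldCalculus M V) (gm : RiemannMetric M V)
    (lc : V → V → V) (hlc : IsAffineConnection C lc) (hlcTF : IsTorsionFree C lc)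
    (hlcMetric : AreDual C gm lc lc)
    (φ : M → ℝ) (gradphi : V) (hgrad : ∀ X, gm.g gradphi X = C.dir X φ)
    (ν : Submodule (M → ℝ) V)
    (hpar : ∀ X : V, ∀ Y ∈ ν, (lc X Y - C.dir X φ • Y - C.dir Y φ • X) ∈ ν) :
    (∀ X ∈ ν, ∀ Y ∈ ν, C.bracket X Y ∈ ν) ∧
    (∀ X Y : V, (∀ Z ∈ ν, gm.g X Z = 0) → (∀ Z ∈ ν, gm.g Y Z = 0) →
      ∀ Z ∈ ν, gm.g (C.bracket X Y) Z = 0) :=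
  weighted_parallel_distribution_integrable_general C gm lc hlcTF hlcMetric φ ν hpar
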